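/- Let P be the probability measure on ℝ with P({1/k}) = 1/2^k for integers k ≥ 1. The second quantization error V_2 = inf over sets α with |α| ≤ 2 of ∑_k (1/2^k) min_{a∈α}(1/k − a)² equals (π² − 12 − 30 log²2 + 24 log 2)/12, attained at the set {a, 1}, where a = E(X | X ∈ {1/k : k ≥ 2}) = 2(log 2 − 1/2). -/

import Mathlib

/-- Distortion error of a nonempty finite set α for the measure P({1/k}) = 1/2^k, k ≥ 1. -/
noncomputable def errR (α : Finset ℝ) (h : α.Nonempty) : ℝ :=
  ∑' k : ℕ, (1/2^(k+1) : ℝ) * α.inf' h (fun a => (1/(k+1 : ℝ) - a)^2)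

/-- Conditional expectation E(X | X ∈ {1/k : k ≥ m}). -/
noncomputable def avRTail (m : ℕ) : ℝ :=
  (∑' k : ℕ, (1/2^(k+m) : ℝ) * (1/(k+m : ℝ))) / (∑' k : ℕ, (1/2^(k+m) : ℝ))

open Real Filter Topology Set

/-!
The moments `∑ 2⁻ᵏ`, `∑ 2⁻ᵏ/k` and `∑ 2⁻ᵏ/k²` of `P` are `1`, `log 2` and
`Li₂(1/2) = π²/12 - log²2/2`. The last value comes from Euler's reflection formula
`Li₂ x + Li₂ (1 - x) + log x log (1 - x) = π²/6`: its left side has derivative zero on `(0, 1)`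
and tends to `Li₂ 1 = ζ(2)` at `1`. So the error of a single point is an explicit quadratic.
For `α = {a ≤ b}`: if `a + b < 1`, the atoms `1` and `1/2` are both nearer to `b` and alone cost
at least `1/24`, more than `V₂`; otherwise every atom `1/k` with `k ≥ 2` is nearer to `a`, and the
one-point error of `a` on these atoms is minimal, equal to `V₂`, at their conditional mean.
-/

theorem HasSum.nat_succ {G : Type*} [AddCommGroup G] [TopologicalSpace G] [IsTopologicalAddGroup G]
    {f : ℕ → G} {a : G} (h : HasSum f a) : HasSum (fun n => f (n + 1)) (a - f 0) := by
  simpa using (hasSum_nat_add_iff' 1).mpr h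

theorem Finset.exists_le_eq_pair {β : Type*} [LinearOrder β] {s : Finset β} (hs : s.Nonempty)
    (hcard : s.card ≤ 2) : ∃ a b, a ≤ b ∧ s = {a, b} := by
  obtain hone | htwo : s.card = 1 ∨ s.card = 2 := by have := hs.card_pos; omega
  · obtain ⟨a, rfl⟩ := Finset.card_eq_one.mp hone
    exact ⟨a, a, le_rfl, by simp⟩
  · obtain ⟨a, b, -, rfl⟩ := Finset.card_eq_two.mp htwo
    rcases le_total a b with hab | hba
    · exact ⟨a, b, hab, rfl⟩
    · exact ⟨b, a, hba, Finset.pair_comm a b⟩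

section MinSq

variable {K : Type*} [Field K] [LinearOrder K] [IsStrictOrderedRing K] {x a b : K}

lemma min_sq_sub_eq_left (hab : a ≤ b) (hx : 2 * x ≤ a + b) :
    min ((x - a) ^ 2) ((x - b) ^ 2) = (x - a) ^ 2 :=
  min_eq_left (by nlinarith)

lemma min_sq_sub_eq_right (hab : a ≤ b) (hx : a + b ≤ 2 * x) :
    min ((x - a) ^ 2) ((x - b) ^ 2) = (x - b) ^ 2 :=
  min_eq_right (by nlinarith)

end MinSq

noncomputable def dilog (x : ℝ) : ℝ := ∑' n : ℕ, x ^ (n + 1) / ((n : ℝ) + 1) ^ 2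

lemma summable_one_div_succ_sq : Summable fun n : ℕ => 1 / ((n : ℝ) + 1) ^ 2 := by
  exact_mod_cast (summable_nat_add_iff 1).mpr (Real.summable_one_div_nat_pow.mpr one_lt_two)

lemma norm_pow_succ_div_succ_sq_le {x : ℝ} (hx : |x| ≤ 1) (n : ℕ) :
    ‖x ^ (n + 1) / ((n : ℝ) + 1) ^ 2‖ ≤ 1 / ((n : ℝ) + 1) ^ 2 := by
  rw [norm_div, norm_pow, norm_eq_abs, norm_of_nonneg (by positivity)]
  gcongr
  exact pow_le_one₀ (abs_nonneg x) hx

lemma summable_dilog {x : ℝ} (hx : |x| ≤ 1) :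
    Summable fun n : ℕ => x ^ (n + 1) / ((n : ℝ) + 1) ^ 2 :=
  summable_one_div_succ_sq.of_norm_bounded (norm_pow_succ_div_succ_sq_le hx)

lemma continuousOn_dilog : ContinuousOn dilog (Icc (-1) 1) :=
  continuousOn_tsum (fun _ => by fun_prop) summable_one_div_succ_sq
    fun n _ hx => norm_pow_succ_div_succ_sq_le (abs_le.mpr hx) n

lemma dilog_zero : dilog 0 = 0 := by
  simp [dilog]

lemma dilog_one : dilog 1 = π ^ 2 / 6 := by
  have h := (hasSum_nat_add_iff' 1).mpr hasSum_zeta_two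
  simp only [Finset.sum_range_one, Nat.cast_zero, Nat.cast_add, Nat.cast_one] at h
  simpa [dilog] using h.tsum_eq

lemma hasDerivAt_dilog_tsum {x : ℝ} (hx : |x| < 1) :
    HasDerivAt dilog (∑' n : ℕ, x ^ n / ((n : ℝ) + 1)) x := by
  obtain ⟨r, hxr, hr1⟩ := exists_between hx
  have hr0 : 0 < r := (abs_nonneg x).trans_lt hxr
  refine hasDerivAt_tsum_of_isPreconnected (summable_geometric_of_lt_one hr0.le hr1) isOpen_Ioo
    isPreconnected_Ioo (g := fun (n : ℕ) (z : ℝ) => z ^ (n + 1) / ((n : ℝ) + 1) ^ 2)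
    (g' := fun (n : ℕ) (z : ℝ) => z ^ n / ((n : ℝ) + 1)) (t := Ioo (-r) r) (y₀ := 0)
    (fun n y _ => ?_) (fun n y hy => ?_) ⟨by linarith, by linarith⟩
    (summable_dilog (by norm_num)) (abs_lt.mp hxr)
  · refine ((hasDerivAt_pow (n + 1) y).div_const (((n : ℝ) + 1) ^ 2)).congr_deriv ?_
    push_cast
    field_simp
  · have hy : |y| ≤ r := abs_le.mpr ⟨hy.1.le, hy.2.le⟩
    rw [norm_div, norm_pow, norm_eq_abs, norm_of_nonneg (by positivity)]
    calc |y| ^ n / ((n : ℝ) + 1) ≤ |y| ^ n := div_le_self (by positivity) (by simp)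
      _ ≤ r ^ n := by gcongr

lemma hasSum_pow_div_succ {x : ℝ} (hx0 : x ≠ 0) (hx : |x| < 1) :
    HasSum (fun n : ℕ => x ^ n / ((n : ℝ) + 1)) (-log (1 - x) / x) := by
  have h : (fun n : ℕ => x ^ n / ((n : ℝ) + 1)) = fun n : ℕ => x ^ (n + 1) / (n + 1) / x := by
    funext n
    rw [pow_succ]
    field_simp
  exact h ▸ (hasSum_pow_div_log_of_abs_lt_one hx).div_const x

lemma hasDerivAt_dilog {x : ℝ} (hx0 : x ≠ 0) (hx : |x| < 1) :
    HasDerivAt dilog (-log (1 - x) / x) x :=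
  (hasSum_pow_div_succ hx0 hx).tsum_eq ▸ hasDerivAt_dilog_tsum hx

lemma hasDerivAt_dilog_reflection {x : ℝ} (hx : x ∈ Ioo 0 1) :
    HasDerivAt (fun y => dilog y + dilog (1 - y) + log y * log (1 - y)) 0 x := by
  obtain ⟨hx0, hx1⟩ := hx
  have hx0' : x ≠ 0 := hx0.ne'
  have hx1' : 1 - x ≠ 0 := by linarith
  have hsub : HasDerivAt (fun y : ℝ => 1 - y) (-1) x := by
    simpa using (hasDerivAt_id x).const_sub 1
  have h₁ := hasDerivAt_dilog hx0' (abs_lt.mpr ⟨by linarith, hx1⟩)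
  have h₂ := (hasDerivAt_dilog hx1' (abs_lt.mpr ⟨by linarith, by linarith⟩)).comp x hsub
  have h₃ := (hasDerivAt_log hx0').mul ((hasDerivAt_log hx1').comp x hsub)
  refine ((h₁.add h₂).add h₃).congr_deriv ?_
  simp only [Function.comp_apply, sub_sub_cancel]
  field_simp
  ring

lemma tendsto_log_mul_log_one_sub :
    Tendsto (fun x => log x * log (1 - x)) (𝓝[≠] 1) (𝓝 0) := by
  have hslope : Tendsto (slope log 1) (𝓝[≠] 1) (𝓝 1) :=
    hasDerivAt_iff_tendsto_slope.mp (by simpa using hasDerivAt_log one_ne_zero)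
  have hmul : Tendsto (fun x : ℝ => (1 - x) * log (1 - x)) (𝓝[≠] 1) (𝓝 0) := by
    have := (continuous_mul_log.comp (continuous_sub_left (1 : ℝ))).tendsto 1
    simpa [Function.comp_def] using this.mono_left nhdsWithin_le_nhds
  have h := (hslope.mul hmul).neg
  rw [mul_zero, neg_zero] at h
  refine h.congr' (eventually_nhdsWithin_of_forall fun x hx => ?_)
  have hx : x - 1 ≠ 0 := sub_ne_zero.mpr hx
  rw [slope_def_field, log_one, sub_zero]
  field_simp
  ring

lemma tendsto_dilog_reflection :
    Tendsto (fun y => dilog y + dilog (1 - y) + log y * log (1 - y)) (𝓝[<] 1)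
      (𝓝 (π ^ 2 / 6)) := by
  have hcont : ContinuousOn (fun y => dilog y + dilog (1 - y)) (Icc 0 1) :=
    (continuousOn_dilog.mono (Icc_subset_Icc (by norm_num) le_rfl)).add
      (continuousOn_dilog.comp (by fun_prop) fun y hy =>
        ⟨by linarith [hy.2], by linarith [hy.1]⟩)
  have h := ((hcont 1 ⟨zero_le_one, le_rfl⟩).mono_left
    (nhdsWithin_le_of_mem (Icc_mem_nhdsLT zero_lt_one))).add
    (tendsto_log_mul_log_one_sub.mono_left (nhdsWithin_mono _ fun _ hy => ne_of_lt hy))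
  simpa [dilog_one, dilog_zero] using h

lemma dilog_add_dilog_one_sub {x : ℝ} (hx : x ∈ Ioo 0 1) :
    dilog x + dilog (1 - x) + log x * log (1 - x) = π ^ 2 / 6 := by
  refine tendsto_nhds_unique (tendsto_const_nhds.congr' ?_) tendsto_dilog_reflection
  filter_upwards [Ioo_mem_nhdsLT zero_lt_one] with y hy
  exact isOpen_Ioo.is_const_of_deriv_eq_zero isPreconnected_Ioo
    (fun z hz => (hasDerivAt_dilog_reflection hz).differentiableAt.differentiableWithinAt)
    (fun z hz => (hasDerivAt_dilog_reflection hz).deriv) hx hy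

lemma dilog_half : dilog (1 / 2) = π ^ 2 / 12 - log 2 ^ 2 / 2 := by
  have h := dilog_add_dilog_one_sub (x := 1 / 2) ⟨by norm_num, by norm_num⟩
  rw [show (1 : ℝ) - 1 / 2 = 1 / 2 by norm_num, one_div, log_inv] at h
  linarith

/-- `P` puts mass `mass k` on `atom k = 1/(k+1)`; the paper's index `k ≥ 1` is shifted to
`k ≥ 0`. -/
noncomputable def mass (k : ℕ) : ℝ := 1 / 2 ^ (k + 1)

noncomputable def atom (k : ℕ) : ℝ := 1 / (k + 1)

lemma mass_zero : mass 0 = 1 / 2 := by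
  norm_num [mass]

lemma atom_zero : atom 0 = 1 := by
  norm_num [atom]

lemma mass_nonneg (k : ℕ) : 0 ≤ mass k := by
  unfold mass; positivity

lemma atom_succ_le_half (k : ℕ) : atom (k + 1) ≤ 1 / 2 := by
  unfold atom
  gcongr
  push_cast
  linarith [k.cast_nonneg (α := ℝ)]

lemma errR_pair (a b : ℝ) (h : ({a, b} : Finset ℝ).Nonempty) :
    errR {a, b} h = ∑' k, mass k * min ((atom k - a) ^ 2) ((atom k - b) ^ 2) := by
  simp [errR, mass, atom]

lemma hasSum_mass : HasSum mass 1 := by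
  have h := hasSum_geometric_two.mul_left (1 / 2)
  rw [mul_two, add_halves] at h
  exact h.congr_fun fun k => by simp [mass, pow_succ]

lemma hasSum_mass_mul_atom : HasSum (fun k => mass k * atom k) (log 2) := by
  have h := hasSum_pow_div_log_of_abs_lt_one (x := 1 / 2) (by norm_num [abs_of_pos])
  rw [show (1 : ℝ) - 1 / 2 = 2⁻¹ by norm_num, log_inv, neg_neg] at h
  exact h.congr_fun fun k => by simp [mass, atom]; ring

lemma hasSum_mass_mul_atom_sq :
    HasSum (fun k => mass k * atom k ^ 2) (π ^ 2 / 12 - log 2 ^ 2 / 2) := by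
  have h := (summable_dilog (x := 1 / 2) (by norm_num [abs_of_pos])).hasSum
  rw [← dilog, dilog_half] at h
  exact h.congr_fun fun k => by simp [mass, atom]; ring

lemma hasSum_mass_mul_sq_atom_sub (t : ℝ) :
    HasSum (fun k => mass k * (atom k - t) ^ 2)
      (π ^ 2 / 12 - log 2 ^ 2 / 2 - 2 * t * log 2 + t ^ 2) := by
  have h := (hasSum_mass_mul_atom_sq.sub (hasSum_mass_mul_atom.mul_left (2 * t))).add
    (hasSum_mass.mul_left (t ^ 2))
  rw [mul_one] at h
  exact h.congr_fun fun k => by ring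

local notation "V₂" => (π ^ 2 - 12 - 30 * log 2 ^ 2 + 24 * log 2) / 12

lemma hasSum_mass_mul_sq_atom_succ_sub (t : ℝ) :
    HasSum (fun k => mass (k + 1) * (atom (k + 1) - t) ^ 2)
      (V₂ + (t - 2 * (log 2 - 1 / 2)) ^ 2 / 2) := by
  have hvalue : V₂ + (t - 2 * (log 2 - 1 / 2)) ^ 2 / 2 =
      π ^ 2 / 12 - log 2 ^ 2 / 2 - 2 * t * log 2 + t ^ 2 - mass 0 * (atom 0 - t) ^ 2 := by
    rw [mass_zero, atom_zero]
    ring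
  exact hvalue ▸ (hasSum_mass_mul_sq_atom_sub t).nat_succ

lemma summable_mass_mul_min (a b : ℝ) :
    Summable fun k => mass k * min ((atom k - a) ^ 2) ((atom k - b) ^ 2) :=
  (hasSum_mass_mul_sq_atom_sub a).summable.of_nonneg_of_le
    (fun k => mul_nonneg (mass_nonneg k) (le_min (sq_nonneg _) (sq_nonneg _)))
    (fun k => mul_le_mul_of_nonneg_left (min_le_left _ _) (mass_nonneg k))

lemma V₂_lt_one_div_24 : V₂ < 1 / 24 := by
  nlinarith [pi_lt_d2, pi_gt_three, log_two_gt_d9, log_two_lt_d9]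

lemma le_tsum_mass_mul_min {a b : ℝ} (hab : a ≤ b) :
    V₂ ≤ ∑' k, mass k * min ((atom k - a) ^ 2) ((atom k - b) ^ 2) := by
  set g := fun k => mass k * min ((atom k - a) ^ 2) ((atom k - b) ^ 2)
  have hg : Summable g := summable_mass_mul_min a b
  have hg0 : ∀ k, 0 ≤ g k :=
    fun k => mul_nonneg (mass_nonneg k) (le_min (sq_nonneg _) (sq_nonneg _))
  rcases lt_or_ge (a + b) 1 with hsmall | hlarge
  · have htwo : g 0 + g 1 ≤ ∑' k, g k := by
      simpa [Finset.sum_range_succ] using hg.sum_le_tsum (Finset.range 2) fun k _ => hg0 k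
    have h0 : g 0 = (1 - b) ^ 2 / 2 := by
      simp only [g, mass, atom]
      rw [min_sq_sub_eq_right hab (by norm_num; linarith)]
      norm_num
      ring
    have h1 : g 1 = (1 / 2 - b) ^ 2 / 4 := by
      simp only [g, mass, atom]
      rw [min_sq_sub_eq_right hab (by norm_num; linarith)]
      norm_num
      ring
    nlinarith [V₂_lt_one_div_24, sq_nonneg (b - 5 / 6)]
  · have htail : ∀ k, g (k + 1) = mass (k + 1) * (atom (k + 1) - a) ^ 2 := fun k => by
      simp only [g]
      rw [min_sq_sub_eq_left hab (by linarith [atom_succ_le_half k])]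
    calc V₂ ≤ V₂ + (a - 2 * (log 2 - 1 / 2)) ^ 2 / 2 := le_add_of_nonneg_right (by positivity)
      _ = ∑' k, g (k + 1) := by
        rw [tsum_congr htail, (hasSum_mass_mul_sq_atom_succ_sub a).tsum_eq]
      _ ≤ g 0 + ∑' k, g (k + 1) := le_add_of_nonneg_left (hg0 0)
      _ = ∑' k, g k := hg.tsum_eq_zero_add.symm

lemma tsum_mass_mul_min_mean_one :
    ∑' k, mass k * min ((atom k - 2 * (log 2 - 1 / 2)) ^ 2) ((atom k - 1) ^ 2) = V₂ := by
  set g := fun k => mass k * min ((atom k - 2 * (log 2 - 1 / 2)) ^ 2) ((atom k - 1) ^ 2)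
  have h0 : g 0 = 0 := by simp [g, atom_zero, sq_nonneg]
  have htail : ∀ k, g (k + 1) = mass (k + 1) * (atom (k + 1) - 2 * (log 2 - 1 / 2)) ^ 2 :=
    fun k => by
      simp only [g]
      rw [min_sq_sub_eq_left (by linarith [log_two_lt_d9])
        (by linarith [atom_succ_le_half k, log_two_gt_d9])]
  have h := (hasSum_nat_add_iff 1).mp ((hasSum_mass_mul_sq_atom_succ_sub _).congr_fun htail)
  simpa [h0] using h.tsum_eq

lemma avRTail_two : avRTail 2 = 2 * (log 2 - 1 / 2) := by
  have hnum := hasSum_mass_mul_atom.nat_succ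
  have hden := hasSum_mass.nat_succ
  rw [mass_zero, atom_zero] at hnum
  rw [mass_zero] at hden
  have h : avRTail 2 = (∑' k, mass (k + 1) * atom (k + 1)) / ∑' k, mass (k + 1) := by
    simp [avRTail, mass, atom, add_assoc, one_add_one_eq_two]
  rw [h, hnum.tsum_eq, hden.tsum_eq]
  ring

theorem stmt9 :
    avRTail 2 = 2 * (Real.log 2 - 1/2) ∧
    sInf {v : ℝ | ∃ (α : Finset ℝ) (h : α.Nonempty), α.card ≤ 2 ∧ v = errR α h}
      = (Real.pi^2 - 12 - 30 * (Real.log 2)^2 + 24 * Real.log 2) / 12 ∧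
    errR {avRTail 2, 1} (by simp) =
      (Real.pi^2 - 12 - 30 * (Real.log 2)^2 + 24 * Real.log 2) / 12 := by
  have hopt : errR {avRTail 2, 1} (by simp) = V₂ := by
    rw [errR_pair, avRTail_two, tsum_mass_mul_min_mean_one]
  refine ⟨avRTail_two,
    IsLeast.csInf_eq ⟨⟨_, _, Finset.card_le_two, hopt.symm⟩, ?_⟩, hopt⟩
  rintro v ⟨α, hα, hcard, rfl⟩
  obtain ⟨a, b, hab, rfl⟩ := Finset.exists_le_eq_pair hα hcard
  rw [errR_pair]
  exact le_tsum_mass_mul_min hab
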